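/- For probability measures ν ≪ μ, the relative entropy equals the supremum over bounded continuous functions f of ∫ f dν - log ∫ e^f dμ: H(ν|μ) = sup_f [∫ f dν - log ∫ e^f dμ]. -/

import Mathlib

/-!
For every `f`, `∫ f dν - log ∫ e^f dμ` falls short of `H(ν|μ)` by the relative entropy of `ν` with
respect to the tilted measure `e^f μ / ∫ e^f dμ`, so Gibbs' inequality gives `≤`.

Conversely, the log-density `φₙ` truncated to `[-n, n]` has `∫ e^φₙ dμ ≤ 1 + e^{-n}`, and
`∫ φₙ dν → H(ν|μ)` by dominated convergence. A measurable `φ` with `|φ| ≤ M` is approximated in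
`L¹(μ + ν)` by bounded continuous `f ≤ M`; since `e^f - e^φ ≤ e^M |f - φ|` and `∫ e^φ dμ ≥ e^{-M}`,
the functional changes little.
-/

open MeasureTheory Real Filter Topology
open scoped BoundedContinuousFunction

namespace Real

lemma exp_sub_exp_le_of_le {a b M : ℝ} (ha : a ≤ M) : exp a - exp b ≤ exp M * |a - b| := by
  have h := add_one_le_exp (b - a)
  rw [exp_sub, le_div_iff₀ (exp_pos a)] at h
  calc exp a - exp b ≤ exp a * |a - b| := by nlinarith [le_abs_self (a - b), exp_pos a]
    _ ≤ exp M * |a - b| := by gcongr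

lemma log_add_le_log_add_div {x y : ℝ} (hx : 0 < x) (hy : 0 ≤ y) :
    log (x + y) ≤ log x + y / x := by
  have h := log_le_sub_one_of_pos (div_pos (add_pos_of_pos_of_nonneg hx hy) hx)
  rw [log_div (by positivity) hx.ne', add_div, div_self hx.ne'] at h
  linarith

end Real

lemma abs_max_min_le_abs {a n : ℝ} (hn : 0 ≤ n) : |max (min a n) (-n)| ≤ |a| := by
  grind [abs_le, le_abs_self, neg_abs_le]

lemma max_min_eq_of_abs_le {a n : ℝ} (h : |a| ≤ n) : max (min a n) (-n) = a := by
  rw [abs_le] at h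
  rw [min_eq_left h.2, max_eq_left h.1]

namespace MeasureTheory

section Measurable

variable {α : Type*} [MeasurableSpace α] {μ ν : Measure α}

lemma integral_sub_log_integral_exp_le_integral_llr [IsProbabilityMeasure μ]
    [IsProbabilityMeasure ν] (hνμ : ν ≪ μ) (h_int : Integrable (llr ν μ) ν)
    {f : α → ℝ} (hfν : Integrable f ν) (hfμ : Integrable (fun x ↦ exp (f x)) μ) :
    ∫ x, f x ∂ν - log (∫ x, exp (f x) ∂μ) ≤ ∫ x, llr ν μ x ∂ν := by
  have := isProbabilityMeasure_tilted hfμ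
  have gibbs := InformationTheory.integral_llr_add_sub_measure_univ_nonneg
    (hνμ.trans (absolutelyContinuous_tilted hfμ))
    (integrable_llr_tilted_right hνμ hfν h_int hfμ)
  rw [integral_llr_tilted_right hνμ hfν hfμ h_int] at gibbs
  simp only [probReal_univ] at gibbs
  linarith

lemma integrable_exp_of_le [IsFiniteMeasure μ] {φ : α → ℝ} (hφ : AEStronglyMeasurable φ μ)
    {M : ℝ} (hφM : ∀ x, φ x ≤ M) : Integrable (fun x ↦ exp (φ x)) μ :=
  .of_bound (continuous_exp.comp_aestronglyMeasurable hφ) (exp M)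
    (.of_forall fun x ↦ by simpa using hφM x)

lemma integral_exp_le_integral_exp_add {f φ : α → ℝ} {M : ℝ} (hfM : ∀ x, f x ≤ M)
    (hf : Integrable (fun x ↦ exp (f x)) μ) (hφ : Integrable (fun x ↦ exp (φ x)) μ)
    (hfφ : Integrable (fun x ↦ f x - φ x) μ) :
    ∫ x, exp (f x) ∂μ ≤ ∫ x, exp (φ x) ∂μ + exp M * ∫ x, |f x - φ x| ∂μ := by
  rw [← sub_le_iff_le_add', ← integral_sub hf hφ, ← integral_const_mul]
  exact integral_mono (hf.sub hφ) (hfφ.abs.const_mul _) fun x ↦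
    exp_sub_exp_le_of_le (hfM x)

/-- The density is truncated rather than `llr`, so that `e^φₙ ≤ dν/dμ + e^{-n}` holds also where
`dν/dμ = 0` (there `llr = log 0 = 0`). -/
noncomputable def truncatedLlr (ν μ : Measure α) (n : ℕ) (x : α) : ℝ :=
  log (max (min (ν.rnDeriv μ x).toReal (exp n)) (exp (-n)))

lemma measurable_truncatedLlr (n : ℕ) : Measurable (truncatedLlr ν μ n) :=
  measurable_log.comp
    (((Measure.measurable_rnDeriv ν μ).ennreal_toReal.min measurable_const).max measurable_const)

lemma exp_truncatedLlr (n : ℕ) (x : α) :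
    exp (truncatedLlr ν μ n x) = max (min (ν.rnDeriv μ x).toReal (exp n)) (exp (-n)) :=
  exp_log (lt_max_of_lt_right (exp_pos _))

lemma abs_truncatedLlr_le (n : ℕ) (x : α) : |truncatedLlr ν μ n x| ≤ n := by
  have hpos : 0 < max (min (ν.rnDeriv μ x).toReal (exp n)) (exp (-n)) :=
    lt_max_of_lt_right (exp_pos _)
  rw [abs_le, truncatedLlr, le_log_iff_exp_le hpos, log_le_iff_le_exp hpos]
  exact ⟨le_max_right _ _,
    max_le (min_le_right _ _) (exp_le_exp.2 (neg_le_self n.cast_nonneg))⟩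

lemma truncatedLlr_of_pos (n : ℕ) {x : α} (hx : 0 < (ν.rnDeriv μ x).toReal) :
    truncatedLlr ν μ n x = max (min (llr ν μ x) n) (-n) := by
  rw [truncatedLlr]
  conv_lhs => rw [← exp_log hx]
  rw [← exp_monotone.map_min, ← exp_monotone.map_max, log_exp, llr_def]

lemma integral_exp_truncatedLlr_le [IsProbabilityMeasure μ] [IsProbabilityMeasure ν] (n : ℕ) :
    ∫ x, exp (truncatedLlr ν μ n x) ∂μ ≤ 1 + exp (-n) := by
  have hdensity : ∫ x, (ν.rnDeriv μ x).toReal ∂μ ≤ 1 := by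
    rw [Measure.integral_toReal_rnDeriv', probReal_univ]
    linarith [measureReal_nonneg (μ := ν.singularPart μ) (s := Set.univ)]
  have hle : ∀ x, exp (truncatedLlr ν μ n x) ≤ (ν.rnDeriv μ x).toReal + exp (-n) := fun x ↦ by
    rw [exp_truncatedLlr]
    exact max_le ((min_le_left _ _).trans (le_add_of_nonneg_right (exp_pos _).le))
      (le_add_of_nonneg_left ENNReal.toReal_nonneg)
  calc ∫ x, exp (truncatedLlr ν μ n x) ∂μ
      ≤ ∫ x, ((ν.rnDeriv μ x).toReal + exp (-n)) ∂μ :=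
        integral_mono_of_nonneg (.of_forall fun x ↦ (exp_pos _).le)
          (Measure.integrable_toReal_rnDeriv.add (integrable_const _)) (.of_forall hle)
    _ ≤ 1 + exp (-n) := by
        rw [integral_add Measure.integrable_toReal_rnDeriv (integrable_const _), integral_const,
          probReal_univ, one_smul]
        linarith

lemma tendsto_integral_truncatedLlr [SigmaFinite μ] [SigmaFinite ν] (hνμ : ν ≪ μ)
    (h_int : Integrable (llr ν μ) ν) :
    Tendsto (fun n ↦ ∫ x, truncatedLlr ν μ n x ∂ν) atTop (𝓝 (∫ x, llr ν μ x ∂ν)) := by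
  have hpos : ∀ᵐ x ∂ν, 0 < (ν.rnDeriv μ x).toReal := by
    filter_upwards [Measure.rnDeriv_pos hνμ, hνμ.ae_le (Measure.rnDeriv_ne_top ν μ)]
      with x hx hx_top
    exact ENNReal.toReal_pos hx.ne' hx_top
  refine tendsto_integral_of_dominated_convergence (fun x ↦ |llr ν μ x|)
    (fun n ↦ (measurable_truncatedLlr n).aestronglyMeasurable) h_int.abs (fun n ↦ ?_) ?_
  · filter_upwards [hpos] with x hx
    rw [truncatedLlr_of_pos n hx]
    exact abs_max_min_le_abs n.cast_nonneg
  · filter_upwards [hpos] with x hx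
    obtain ⟨N, hN⟩ := exists_nat_ge |llr ν μ x|
    refine tendsto_atTop_of_eventually_const (i₀ := N) fun n hn ↦ ?_
    rw [truncatedLlr_of_pos n hx, max_min_eq_of_abs_le (hN.trans (Nat.cast_le.2 hn))]

end Measurable

variable {X : Type*} [MeasurableSpace X] [TopologicalSpace X]
  [TopologicalSpace.PseudoMetrizableSpace X] [BorelSpace X] {μ ν : Measure X}

lemma exists_boundedContinuous_le_integral_abs_sub_le [IsFiniteMeasure μ] [IsFiniteMeasure ν]
    {φ : X → ℝ} (hφ : Integrable φ (μ + ν)) {M : ℝ} (hφM : ∀ x, φ x ≤ M) {δ : ℝ}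
    (hδ : 0 < δ) :
    ∃ f : X →ᵇ ℝ, (∀ x, f x ≤ M) ∧
      ∫ x, |f x - φ x| ∂μ ≤ δ ∧ ∫ x, |f x - φ x| ∂ν ≤ δ := by
  obtain ⟨f₀, hf₀, -⟩ := hφ.exists_boundedContinuous_integral_sub_le hδ
  have hdist : Integrable (fun x ↦ ‖φ x - f₀ x‖) (μ + ν) := (hφ.sub (f₀.integrable _)).norm
  obtain ⟨hdistμ, hdistν⟩ := integrable_add_measure.1 hdist
  rw [integral_add_measure hdistμ hdistν] at hf₀
  set f := f₀ ⊓ BoundedContinuousFunction.const X M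
  have hclose : ∀ x, |f x - φ x| ≤ ‖φ x - f₀ x‖ := fun x ↦ by
    simpa [f, min_eq_left (hφM x), abs_sub_comm] using abs_min_sub_min_le_max (f₀ x) M (φ x) M
  have hbound : ∀ m : Measure X, Integrable (fun x ↦ ‖φ x - f₀ x‖) m →
      ∫ x, |f x - φ x| ∂m ≤ ∫ x, ‖φ x - f₀ x‖ ∂m := fun m hm ↦
    integral_mono_of_nonneg (.of_forall fun _ ↦ abs_nonneg _) hm (.of_forall hclose)
  have hnonneg : ∀ m : Measure X, 0 ≤ ∫ x, ‖φ x - f₀ x‖ ∂m := fun m ↦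
    integral_nonneg fun _ ↦ norm_nonneg _
  refine ⟨f, fun x ↦ min_le_right _ _, ?_, ?_⟩
  · linarith [hbound μ hdistμ, hnonneg ν]
  · linarith [hbound ν hdistν, hnonneg μ]

lemma exists_boundedContinuous_integral_sub_log_integral_exp_ge [IsProbabilityMeasure μ]
    [IsFiniteMeasure ν] {φ : X → ℝ} (hφ : Measurable φ) {M : ℝ} (hφM : ∀ x, |φ x| ≤ M)
    {ε : ℝ} (hε : 0 < ε) :
    ∃ f : X →ᵇ ℝ, ∫ x, φ x ∂ν - log (∫ x, exp (φ x) ∂μ) - ε ≤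
      ∫ x, f x ∂ν - log (∫ x, exp (f x) ∂μ) := by
  have hint : ∀ (m : Measure X) [IsFiniteMeasure m], Integrable φ m := fun m _ ↦
    .of_bound hφ.aestronglyMeasurable M (.of_forall hφM)
  have hexp_int : Integrable (fun x ↦ exp (φ x)) μ :=
    integrable_exp_of_le hφ.aestronglyMeasurable fun x ↦ (le_abs_self _).trans (hφM x)
  set δ := ε / (1 + exp (2 * M))
  have hδ : 0 < δ := by positivity
  obtain ⟨f, hfM, hμ, hν⟩ := exists_boundedContinuous_le_integral_abs_sub_le (hint (μ + ν))
    (fun x ↦ (le_abs_self _).trans (hφM x)) hδ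
  set Z := ∫ x, exp (φ x) ∂μ
  have hZ : exp (-M) ≤ Z := by
    simpa using integral_mono (integrable_const (exp (-M))) hexp_int
      fun x ↦ exp_le_exp.2 (neg_le_of_abs_le (hφM x))
  have hZ_pos : 0 < Z := (exp_pos _).trans_le hZ
  have hlinear : ∫ x, φ x ∂ν - δ ≤ ∫ x, f x ∂ν := by
    have := (abs_le.1 (abs_integral_le_integral_abs (μ := ν) (f := fun x ↦ f x - φ x))).1
    rw [integral_sub (f.integrable ν) (hint ν)] at this
    linarith
  have hexp_f_int : Integrable (fun x ↦ exp (f x)) μ :=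
    integrable_exp_of_le f.continuous.aestronglyMeasurable hfM
  have hexp : ∫ x, exp (f x) ∂μ ≤ Z + exp M * δ := by
    exact (integral_exp_le_integral_exp_add hfM hexp_f_int hexp_int
      ((f.integrable μ).sub (hint μ))).trans (by gcongr)
  have hlog : log (∫ x, exp (f x) ∂μ) ≤ log Z + exp (2 * M) * δ :=
    calc log (∫ x, exp (f x) ∂μ) ≤ log (Z + exp M * δ) :=
          log_le_log (integral_exp_pos hexp_f_int) hexp
      _ ≤ log Z + exp M * δ / Z := log_add_le_log_add_div hZ_pos (by positivity)
      _ ≤ log Z + exp (2 * M) * δ := by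
          rw [add_le_add_iff_left, div_le_iff₀ hZ_pos]
          calc exp M * δ = exp (2 * M) * δ * exp (-M) := by
                rw [mul_right_comm, ← exp_add]; ring_nf
            _ ≤ exp (2 * M) * δ * Z := by gcongr
  have hε_split : δ + exp (2 * M) * δ = ε := by
    simp only [δ]; field_simp
  exact ⟨f, by linarith⟩

lemma exists_boundedContinuous_integral_llr_sub_le [IsProbabilityMeasure μ]
    [IsProbabilityMeasure ν] (hνμ : ν ≪ μ) (h_int : Integrable (llr ν μ) ν) {ε : ℝ}
    (hε : 0 < ε) :
    ∃ f : X →ᵇ ℝ, ∫ x, llr ν μ x ∂ν - ε ≤ ∫ x, f x ∂ν - log (∫ x, exp (f x) ∂μ) := by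
  have hlim : Tendsto (fun n : ℕ ↦ ∫ x, truncatedLlr ν μ n x ∂ν - exp (-n)) atTop
      (𝓝 (∫ x, llr ν μ x ∂ν - 0)) :=
    (tendsto_integral_truncatedLlr hνμ h_int).sub
      (tendsto_exp_neg_atTop_nhds_zero.comp tendsto_natCast_atTop_atTop)
  obtain ⟨n, hn⟩ := (hlim.eventually (eventually_gt_nhds (by linarith :
    ∫ x, llr ν μ x ∂ν - ε / 2 < ∫ x, llr ν μ x ∂ν - 0))).exists
  obtain ⟨f, hf⟩ := exists_boundedContinuous_integral_sub_log_integral_exp_ge (μ := μ) (ν := ν)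
    (measurable_truncatedLlr (ν := ν) (μ := μ) n) (abs_truncatedLlr_le n) (half_pos hε)
  have hexp_int : Integrable (fun x ↦ exp (truncatedLlr ν μ n x)) μ :=
    integrable_exp_of_le (measurable_truncatedLlr n).aestronglyMeasurable
      fun x ↦ (le_abs_self _).trans (abs_truncatedLlr_le n x)
  have hlog : log (∫ x, exp (truncatedLlr ν μ n x) ∂μ) ≤ exp (-n) :=
    (log_le_sub_one_of_pos (integral_exp_pos hexp_int)).trans
      (by linarith [integral_exp_truncatedLlr_le (μ := μ) (ν := ν) n])
  exact ⟨f, by linarith⟩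

end MeasureTheory

/-- Donsker–Varadhan variational formula: on a compact metrizable space, for
probability measures `ν ≪ μ`, the relative entropy equals the supremum over
(bounded) continuous functions `f` of `∫ f dν - log ∫ e^f dμ`. -/
theorem relativeEntropy_eq_iSup_donsker_varadhan
    {X : Type*} [TopologicalSpace X] [CompactSpace X] [TopologicalSpace.MetrizableSpace X]
    [MeasurableSpace X] [BorelSpace X]
    (μ ν : Measure X) [IsProbabilityMeasure μ] [IsProbabilityMeasure ν]
    (hac : ν ≪ μ)
    (hint : Integrable (fun x => Real.log ((ν.rnDeriv μ x).toReal)) ν) :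
    ∫ x, Real.log ((ν.rnDeriv μ x).toReal) ∂ν =
      ⨆ f : C(X, ℝ), (∫ x, f x ∂ν - Real.log (∫ x, Real.exp (f x) ∂μ)) := by
  have hupper : ∀ f : C(X, ℝ),
      ∫ x, f x ∂ν - log (∫ x, exp (f x) ∂μ) ≤ ∫ x, llr ν μ x ∂ν := fun f ↦
    integral_sub_log_integral_exp_le_integral_llr hac hint
      (f.continuous.integrable_of_hasCompactSupport (.of_compactSpace _))
      ((continuous_exp.comp f.continuous).integrable_of_hasCompactSupport (.of_compactSpace _))
  refine le_antisymm (le_of_forall_pos_le_add fun ε hε ↦ ?_) (ciSup_le hupper)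
  obtain ⟨f, hf⟩ := exists_boundedContinuous_integral_llr_sub_le hac hint hε
  calc ∫ x, llr ν μ x ∂ν ≤ ∫ x, f x ∂ν - log (∫ x, exp (f x) ∂μ) + ε := by linarith
    _ ≤ (⨆ f : C(X, ℝ), (∫ x, f x ∂ν - log (∫ x, exp (f x) ∂μ))) + ε := by
        gcongr
        exact le_ciSup (f := fun f : C(X, ℝ) ↦ ∫ x, f x ∂ν - log (∫ x, exp (f x) ∂μ))
          ⟨_, Set.forall_mem_range.2 hupper⟩ f.toContinuousMap
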